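/- Global maximizers are fixed points: Assume each diagonal block C_{ii} of C is positive semidefinite, and let Ĝ ∈ O(d)^{⊗n} be a global maximizer of (QP). Then C_iᵀ Ĝ Ĝ_iᵀ − C_{ii} is positive semidefinite for every i ∈ [n], and Ĝ is a fixed point of T_α for every α ≥ 0 (i.e. Ĝ ∈ T_α(Ĝ) for all α ≥ 0). -/

import Mathlib

open Matrix BigOperators

noncomputable section
namespace GroupSync

variable {n d : ℕ}

/-- Frobenius norm of a real matrix. -/
def frob {m k : Type*} [Fintype m] [Fintype k] (X : Matrix m k ℝ) : ℝ :=
  Real.sqrt (∑ i, ∑ j, (X i j) ^ 2)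

/-- Spectral (operator) norm of a real matrix: the operator norm of the induced
linear map between Euclidean spaces. -/
def spec {m k : Type*} [Fintype m] [Fintype k] [DecidableEq k] (X : Matrix m k ℝ) : ℝ :=
  ‖LinearMap.toContinuousLinearMap (Matrix.toEuclideanLin X)‖

/-- Nuclear norm: trace of the positive semidefinite square root of `X * Xᵀ`
(i.e. the sum of the singular values of `X`). -/
def nuclear {m k : Type*} [Fintype m] [Fintype k] [DecidableEq m] (X : Matrix m k ℝ) : ℝ :=
  (((Matrix.posSemidef_self_mul_conjTranspose X).1.eigenvectorUnitary.1 : Matrix m m ℝ) *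
    (Matrix.diagonal ((↑) ∘ (Real.sqrt ·) ∘ (Matrix.posSemidef_self_mul_conjTranspose X).1.eigenvalues) :
      Matrix m m ℝ) *
    (star (Matrix.posSemidef_self_mul_conjTranspose X).1.eigenvectorUnitary : Matrix m m ℝ)).trace

/-- The positive semidefinite square root of `X * Xᵀ`. -/
def psdSqrtMulT {m k : Type*} [Fintype m] [Fintype k] [DecidableEq m] (X : Matrix m k ℝ) :
    Matrix m m ℝ :=
  (Matrix.posSemidef_self_mul_conjTranspose X).1.eigenvectorUnitary.1 *
    Matrix.diagonal ((↑) ∘ (Real.sqrt ·) ∘ (Matrix.posSemidef_self_mul_conjTranspose X).1.eigenvalues) *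
    (star (Matrix.posSemidef_self_mul_conjTranspose X).1.eigenvectorUnitary : Matrix m m ℝ)

/-- Membership in the orthogonal group `O(d)`. -/
def IsOd (g : Matrix (Fin d) (Fin d) ℝ) : Prop :=
  gᵀ * g = 1 ∧ g * gᵀ = 1

/-- Membership in the special orthogonal group `SO(d)`. -/
def IsSOd (g : Matrix (Fin d) (Fin d) ℝ) : Prop :=
  IsOd g ∧ g.det = 1

/-- The `i`-th `d × d` block of an `nd × d` matrix. -/
def blk (X : Matrix (Fin n × Fin d) (Fin d) ℝ) (i : Fin n) : Matrix (Fin d) (Fin d) ℝ :=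
  Matrix.of fun a b => X (i, a) b

/-- Membership in `O(d)^{⊗n}`: every `d × d` block is orthogonal. -/
def OdN (G : Matrix (Fin n × Fin d) (Fin d) ℝ) : Prop :=
  ∀ i : Fin n, IsOd (blk G i)

/-- Membership in `SO(d)^{⊗n}`. -/
def SOdN (G : Matrix (Fin n × Fin d) (Fin d) ℝ) : Prop :=
  ∀ i : Fin n, IsSOd (blk G i)

/-- The `i`-th block column (an `nd × d` matrix) of an `nd × nd` matrix. -/
def bcol (M : Matrix (Fin n × Fin d) (Fin n × Fin d) ℝ) (i : Fin n) :
    Matrix (Fin n × Fin d) (Fin d) ℝ :=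
  Matrix.of fun p b => M p (i, b)

/-- The `ij`-th `d × d` block of an `nd × nd` matrix. -/
def dblk (M : Matrix (Fin n × Fin d) (Fin n × Fin d) ℝ) (i j : Fin n) :
    Matrix (Fin d) (Fin d) ℝ :=
  Matrix.of fun a b => M (i, a) (j, b)

/-- `G' ∈ T_α(G)` (where `Ct = C + α I`): `G' ∈ O(d)^{⊗n}` and each block `G'_i` is a
nearest point of `C̃ᵢᵀ G` in `O(d)` w.r.t. the Frobenius norm. -/
def InT (Ct : Matrix (Fin n × Fin d) (Fin n × Fin d) ℝ)
    (G G' : Matrix (Fin n × Fin d) (Fin d) ℝ) : Prop :=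
  OdN G' ∧ ∀ i : Fin n, ∀ X : Matrix (Fin d) (Fin d) ℝ, IsOd X →
    frob (blk G' i - (bcol Ct i)ᵀ * G) ≤ frob (X - (bcol Ct i)ᵀ * G)

/-- `G' ∈ ST_α(G)`: the `SO(d)` analogue of `InT`. -/
def InST (Ct : Matrix (Fin n × Fin d) (Fin n × Fin d) ℝ)
    (G G' : Matrix (Fin n × Fin d) (Fin d) ℝ) : Prop :=
  SOdN G' ∧ ∀ i : Fin n, ∀ X : Matrix (Fin d) (Fin d) ℝ, IsSOd X →
    frob (blk G' i - (bcol Ct i)ᵀ * G) ≤ frob (X - (bcol Ct i)ᵀ * G)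

/-- The quotient distance `d(X, Y) = min_{g ∈ O(d)} ‖X − Y g‖_F`. -/
def dOrth (X Y : Matrix (Fin n × Fin d) (Fin d) ℝ) : ℝ :=
  ⨅ g : {g : Matrix (Fin d) (Fin d) ℝ // IsOd g}, frob (X - Y * g.1)

/-- The objective function `f(G) = tr(Gᵀ C G)`. -/
def obj (C : Matrix (Fin n × Fin d) (Fin n × Fin d) ℝ)
    (G : Matrix (Fin n × Fin d) (Fin d) ℝ) : ℝ :=
  Matrix.trace (Gᵀ * C * G)

/-- Hadamard (entrywise) product. -/
def had {m k : Type*} (X Y : Matrix m k ℝ) : Matrix m k ℝ :=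
  Matrix.of fun p q => X p q * Y p q

/-- `W ⊗ (1_d 1_dᵀ)`, the Kronecker product of `W` with the all-ones `d × d` matrix. -/
def kron1 (W : Matrix (Fin n) (Fin n) ℝ) : Matrix (Fin n × Fin d) (Fin n × Fin d) ℝ :=
  Matrix.kroneckerMap (· * ·) W (Matrix.of fun (_ _ : Fin d) => (1 : ℝ))

/-- The all-ones matrix `1_m 1_mᵀ`. -/
def onesMat (m : Type*) : Matrix m m ℝ :=
  Matrix.of fun _ _ => (1 : ℝ)

/-- `symblockdiag`: symmetrize the diagonal `d × d` blocks, zero out all other blocks. -/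
def sbd (X : Matrix (Fin n × Fin d) (Fin n × Fin d) ℝ) :
    Matrix (Fin n × Fin d) (Fin n × Fin d) ℝ :=
  Matrix.of fun p q => if p.1 = q.1 then (X p q + X (p.1, q.2) (q.1, p.2)) / 2 else 0

/-- `S(G) = symblockdiag(C G Gᵀ) − C`. -/
def Smat (C : Matrix (Fin n × Fin d) (Fin n × Fin d) ℝ)
    (G : Matrix (Fin n × Fin d) (Fin d) ℝ) : Matrix (Fin n × Fin d) (Fin n × Fin d) ℝ :=
  sbd (C * (G * Gᵀ)) - C

/-- `G` is a second-order critical point of (QP): `S(G) G = 0` and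
`⟨H, S(G) H⟩ ≥ 0` for all tangent directions `H` (blockwise `Hᵢ Gᵢᵀ` skew-symmetric). -/
def IsSOC (C : Matrix (Fin n × Fin d) (Fin n × Fin d) ℝ)
    (G : Matrix (Fin n × Fin d) (Fin d) ℝ) : Prop :=
  Smat C G * G = 0 ∧
  ∀ H : Matrix (Fin n × Fin d) (Fin d) ℝ,
    (∀ i : Fin n, (blk H i * (blk G i)ᵀ)ᵀ = -(blk H i * (blk G i)ᵀ)) →
    0 ≤ Matrix.trace (Hᵀ * (Smat C G * H))

/-- Smallest singular value of a square matrix, as the minimum of `‖M v‖` over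
unit vectors `v`. -/
def sigmaMin (M : Matrix (Fin d) (Fin d) ℝ) : ℝ :=
  ⨅ v : {v : Fin d → ℝ // ∑ a, (v a) ^ 2 = 1}, Real.sqrt (∑ a, (M.mulVec v.1 a) ^ 2)

/-- The singular values of a square matrix: square roots of the eigenvalues of `Mᵀ M`. -/
def singVal (M : Matrix (Fin d) (Fin d) ℝ) (l : Fin d) : ℝ :=
  Real.sqrt ((by simpa using Matrix.isHermitian_conjTranspose_mul_self M : (Mᵀ * M).IsHermitian).eigenvalues l)

/-- Smallest eigenvalue of a (symmetric) matrix, as the minimum Rayleigh quotient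
over unit vectors. -/
def lambdaMin {m : Type*} [Fintype m] (M : Matrix m m ℝ) : ℝ :=
  ⨅ v : {v : m → ℝ // ∑ i, (v i) ^ 2 = 1}, v.1 ⬝ᵥ M.mulVec v.1

/-- `D_α(G)`: block diagonal of the psd square roots of `(C̃ᵢᵀ G)(C̃ᵢᵀ G)ᵀ`, minus `C̃`. -/
def Dmat (Ct : Matrix (Fin n × Fin d) (Fin n × Fin d) ℝ)
    (G : Matrix (Fin n × Fin d) (Fin d) ℝ) : Matrix (Fin n × Fin d) (Fin n × Fin d) ℝ :=
  (Matrix.of fun p q =>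
    if p.1 = q.1 then psdSqrtMulT ((bcol Ct p.1)ᵀ * G) p.2 q.2 else 0) - Ct

/-- The residual function `ρ_α(G) = ‖D_α(G) G‖_F`. -/
def rho (Ct : Matrix (Fin n × Fin d) (Fin n × Fin d) ℝ)
    (G : Matrix (Fin n × Fin d) (Fin d) ℝ) : ℝ :=
  frob (Dmat Ct G * G)

/-- Blockwise infinity norm: `‖X‖_∞ = max_i ‖X_i‖` (spectral norm of the blocks). -/
def binf (X : Matrix (Fin n × Fin d) (Fin d) ℝ) : ℝ :=
  ⨆ i : Fin n, spec (blk X i)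

/-!
Replacing the block `Ĝᵢ` of a maximizer by `Q Ĝᵢ`, `Q ∈ O(d)`, cannot increase `f`; expanding `f`,
this says `tr(Qᵀ Mᵢ) ≤ tr Mᵢ` for `Mᵢ = Cᵢᵀ Ĝ Ĝᵢᵀ − Cᵢᵢ`. A matrix `M` for which `Q ↦ tr(Qᵀ M)` is
maximal on `O(d)` at `Q = 1` is positive semidefinite: Householder reflections give `vᵀ M v ≥ 0`
and products of two reflections give `Mᵀ = M`. Hence `C̃ᵢᵀ Ĝ Ĝᵢᵀ = Mᵢ + Cᵢᵢ + α I ⪰ 0`, and since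
`tr(Qᵀ N) ≤ tr N` for `N ⪰ 0`, `Q ∈ O(d)`, an orthogonal `P` with `B Pᵀ ⪰ 0` is a nearest point
of `B` in `O(d)`.
-/

theorem IsOd.mul {X Y : Matrix (Fin d) (Fin d) ℝ} (hX : IsOd X) (hY : IsOd Y) : IsOd (X * Y) :=
  ⟨by rw [transpose_mul, Matrix.mul_assoc, ← Matrix.mul_assoc Xᵀ, hX.1, Matrix.one_mul, hY.1],
    by rw [transpose_mul, Matrix.mul_assoc, ← Matrix.mul_assoc Y, hY.2, Matrix.one_mul, hX.2]⟩

theorem IsOd.transpose {X : Matrix (Fin d) (Fin d) ℝ} (hX : IsOd X) : IsOd Xᵀ := by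
  simpa only [IsOd, transpose_transpose] using hX.symm

theorem isOd_of_transpose_eq_of_mul_self {X : Matrix (Fin d) (Fin d) ℝ} (hT : Xᵀ = X)
    (hX : X * X = 1) : IsOd X := by
  simp only [IsOd, hT, hX, and_self]

/-- For `v = 0` this is `1`, as `2 / 0 = 0`. -/
def householder (v : Fin d → ℝ) : Matrix (Fin d) (Fin d) ℝ :=
  1 - (2 / (v ⬝ᵥ v)) • vecMulVec v v

theorem transpose_householder (v : Fin d → ℝ) : (householder v)ᵀ = householder v := by
  rw [householder, transpose_sub, transpose_one, transpose_smul, transpose_vecMulVec]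

theorem isOd_householder (v : Fin d → ℝ) : IsOd (householder v) := by
  refine isOd_of_transpose_eq_of_mul_self (transpose_householder v) ?_
  have hp : 2 / (v ⬝ᵥ v) * (2 / (v ⬝ᵥ v)) * (v ⬝ᵥ v) = 2 * (2 / (v ⬝ᵥ v)) := by
    rcases eq_or_ne (v ⬝ᵥ v) 0 with h | h
    · simp [h]
    · field_simp
  have hPP : vecMulVec v v * vecMulVec v v = (v ⬝ᵥ v) • vecMulVec v v := by
    rw [vecMulVec_mul_vecMulVec, vecMulVec_smul]
  rw [householder, Matrix.sub_mul, Matrix.mul_sub, Matrix.mul_sub, Matrix.one_mul, Matrix.mul_one,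
    Matrix.one_mul, smul_mul_smul_comm, hPP, smul_smul, hp]
  module

theorem householder_mulVec (v w : Fin d → ℝ) :
    householder v *ᵥ w = w - (2 / (v ⬝ᵥ v) * (v ⬝ᵥ w)) • v := by
  simp [householder, sub_mulVec, smul_mulVec, vecMulVec_mulVec, smul_smul, dotProduct_comm v w]

theorem trace_householder_mul (v : Fin d → ℝ) (N : Matrix (Fin d) (Fin d) ℝ) :
    (householder v * N).trace = N.trace - 2 / (v ⬝ᵥ v) * (v ⬝ᵥ N *ᵥ v) := by
  rw [householder, Matrix.sub_mul, Matrix.one_mul, Matrix.smul_mul, trace_sub, trace_smul,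
    vecMulVec_mul, trace_vecMulVec, dotProduct_comm v (v ᵥ* N), ← dotProduct_mulVec, smul_eq_mul]

theorem dotProduct_mulVec_nonneg_of_trace_le {M : Matrix (Fin d) (Fin d) ℝ}
    (h : ∀ Q, IsOd Q → (Qᵀ * M).trace ≤ M.trace) (v : Fin d → ℝ) : 0 ≤ v ⬝ᵥ M *ᵥ v := by
  rcases eq_or_ne v 0 with rfl | hv
  · simp
  have hQ := h _ (isOd_householder v)
  rw [transpose_householder, trace_householder_mul] at hQ
  have hvv : 0 < v ⬝ᵥ v := by simpa using dotProduct_star_self_pos_iff.2 hv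
  exact nonneg_of_mul_nonneg_right (sub_le_self_iff _ |>.mp hQ) (div_pos two_pos hvv)

theorem eq_zero_of_forall_mul_le {c k : ℝ} (h : ∀ t : ℝ, t * c ≤ k) : c = 0 := by
  by_contra hc
  have := h ((k + 1) / c)
  rw [div_mul_cancel₀ _ hc] at this
  linarith

theorem transpose_eq_of_trace_le {M : Matrix (Fin d) (Fin d) ℝ}
    (h : ∀ Q, IsOd Q → (Qᵀ * M).trace ≤ M.trace) : Mᵀ = M := by
  ext a b
  rcases eq_or_ne a b with rfl | hab
  · rfl
  suffices ∀ t : ℝ, t * (M a b - M b a) ≤ M a a + M b b by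
    simpa [sub_eq_zero, eq_comm] using eq_zero_of_forall_mul_le this
  intro t
  set u : Fin d → ℝ := Pi.single a 1
  set w : Fin d → ℝ := t • Pi.single a 1 + Pi.single b 1
  have hQ := h _ ((isOd_householder u).mul (isOd_householder w))
  rw [transpose_mul, transpose_householder, transpose_householder, Matrix.mul_assoc,
    trace_householder_mul, trace_householder_mul, ← mulVec_mulVec, householder_mulVec] at hQ
  have hab' : b ≠ a := hab.symm
  simp only [dotProduct_single, Pi.single_eq_same, mul_one, div_one, mulVec_single,
    MulOpposite.op_one, one_smul, single_dotProduct, col_apply, one_mul, dotProduct_add,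
    dotProduct_smul, Pi.add_apply, Pi.smul_apply, smul_eq_mul, ne_eq, hab, not_false_eq_true,
    Pi.single_eq_of_ne, add_zero, hab', mul_zero, zero_add, mulVec_add, mulVec_smul, dotProduct_sub,
    add_dotProduct, smul_dotProduct, tsub_le_iff_right, u, w] at hQ
  field_simp at hQ
  linarith

theorem posSemidef_of_trace_le {M : Matrix (Fin d) (Fin d) ℝ}
    (h : ∀ Q, IsOd Q → (Qᵀ * M).trace ≤ M.trace) : M.PosSemidef :=
  .of_dotProduct_mulVec_nonneg (by simpa [IsHermitian] using transpose_eq_of_trace_le h)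
    (by simpa using dotProduct_mulVec_nonneg_of_trace_le h)

open scoped MatrixOrder in
theorem trace_transpose_mul_le_of_posSemidef {N Q : Matrix (Fin d) (Fin d) ℝ}
    (hN : N.PosSemidef) (hQ : IsOd Q) : (Qᵀ * N).trace ≤ N.trace := by
  obtain ⟨S, rfl⟩ := CStarAlgebra.nonneg_iff_eq_star_mul_self.mp hN.nonneg
  have hS : star S = Sᵀ := conjTranspose_eq_transpose_of_trivial S
  rw [hS]
  -- `0 ≤ ‖S Q - S‖_F² = 2 tr(SᵀS) - 2 tr(Qᵀ SᵀS)`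
  have hsq := (posSemidef_conjTranspose_mul_self (S * Q - S)).trace_nonneg
  have hcross : (Sᵀ * (S * Q)).trace = (Qᵀ * (Sᵀ * S)).trace := by
    rw [← trace_transpose, transpose_mul, transpose_mul, transpose_transpose, Matrix.mul_assoc]
  have hrot : (Qᵀ * Sᵀ * (S * Q)).trace = (Sᵀ * S).trace := by
    rw [← Matrix.mul_assoc, trace_mul_cycle, ← Matrix.mul_assoc Q, hQ.2, Matrix.one_mul]
  rw [conjTranspose_eq_transpose_of_trivial, transpose_sub, transpose_mul, Matrix.sub_mul,
    Matrix.mul_sub, Matrix.mul_sub, trace_sub, trace_sub, trace_sub, hrot, hcross,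
    Matrix.mul_assoc Qᵀ] at hsq
  linarith

theorem frob_eq_sqrt_trace {m k : Type*} [Fintype m] [Fintype k] (X : Matrix m k ℝ) :
    frob X = √(Xᵀ * X).trace := by
  rw [frob, trace, Finset.sum_comm]
  simp only [diag, mul_apply, transpose_apply, sq]

theorem frob_sub_le_of_trace_le {P X B : Matrix (Fin d) (Fin d) ℝ} (hP : IsOd P) (hX : IsOd X)
    (h : (Xᵀ * B).trace ≤ (Pᵀ * B).trace) : frob (P - B) ≤ frob (X - B) := by
  have expand : ∀ Y, IsOd Y →
      ((Y - B)ᵀ * (Y - B)).trace = d - 2 * (Yᵀ * B).trace + (Bᵀ * B).trace := by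
    intro Y hY
    have hBY : (Bᵀ * Y).trace = (Yᵀ * B).trace := by
      rw [← trace_transpose, transpose_mul, transpose_transpose]
    rw [transpose_sub, Matrix.sub_mul, Matrix.mul_sub, Matrix.mul_sub, trace_sub, trace_sub,
      trace_sub, hY.1, hBY, trace_one, Fintype.card_fin]
    ring
  rw [frob_eq_sqrt_trace, frob_eq_sqrt_trace, expand P hP, expand X hX]
  exact Real.sqrt_le_sqrt (by linarith)

theorem frob_sub_le_of_posSemidef_mul_transpose {P B X : Matrix (Fin d) (Fin d) ℝ} (hP : IsOd P)
    (hBP : (B * Pᵀ).PosSemidef) (hX : IsOd X) : frob (P - B) ≤ frob (X - B) := by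
  refine frob_sub_le_of_trace_le hP hX ?_
  have h := trace_transpose_mul_le_of_posSemidef hBP (hX.mul hP.transpose)
  rwa [transpose_mul, transpose_transpose, Matrix.mul_assoc, trace_mul_comm, Matrix.mul_assoc,
    Matrix.mul_assoc, hP.1, Matrix.mul_one, trace_mul_comm B] at h

def blkEmb (i : Fin n) (Z : Matrix (Fin d) (Fin d) ℝ) : Matrix (Fin n × Fin d) (Fin d) ℝ :=
  Matrix.of fun p b => if p.1 = i then Z p.2 b else 0

theorem blk_add (X Y : Matrix (Fin n × Fin d) (Fin d) ℝ) (i : Fin n) :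
    blk (X + Y) i = blk X i + blk Y i := rfl

theorem blk_smul (c : ℝ) (X : Matrix (Fin n × Fin d) (Fin d) ℝ) (i : Fin n) :
    blk (c • X) i = c • blk X i := rfl

theorem blk_blkEmb (i j : Fin n) (Z : Matrix (Fin d) (Fin d) ℝ) :
    blk (blkEmb i Z) j = if j = i then Z else 0 := by
  ext a b
  split_ifs with h <;> simp [blk, blkEmb, h]

theorem trace_blkEmb_transpose_mul (i : Fin n) (Z : Matrix (Fin d) (Fin d) ℝ)
    (Y : Matrix (Fin n × Fin d) (Fin d) ℝ) :
    ((blkEmb i Z)ᵀ * Y).trace = (Zᵀ * blk Y i).trace := by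
  simp [trace, mul_apply, blkEmb, blk, Fintype.sum_prod_type, ite_mul]

theorem blk_mul_blkEmb (M : Matrix (Fin n × Fin d) (Fin n × Fin d) ℝ) (i j : Fin n)
    (Z : Matrix (Fin d) (Fin d) ℝ) : blk (M * blkEmb j Z) i = dblk M i j * Z := by
  ext a b
  simp [blk, dblk, blkEmb, mul_apply, Fintype.sum_prod_type, mul_ite]

theorem bcol_transpose_mul (M : Matrix (Fin n × Fin d) (Fin n × Fin d) ℝ)
    (G : Matrix (Fin n × Fin d) (Fin d) ℝ) (i : Fin n) : (bcol M i)ᵀ * G = blk (Mᵀ * G) i :=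
  rfl

theorem transpose_dblk (M : Matrix (Fin n × Fin d) (Fin n × Fin d) ℝ) (i j : Fin n) :
    (dblk M i j)ᵀ = dblk Mᵀ j i :=
  rfl

theorem OdN.add_blkEmb {G : Matrix (Fin n × Fin d) (Fin d) ℝ} (hG : OdN G) {i : Fin n}
    {Z : Matrix (Fin d) (Fin d) ℝ} (hZ : IsOd (blk G i + Z)) : OdN (G + blkEmb i Z) := by
  intro j
  rw [blk_add, blk_blkEmb]
  split_ifs with h
  · exact h ▸ hZ
  · simpa using hG j

theorem obj_add_blkEmb {C : Matrix (Fin n × Fin d) (Fin n × Fin d) ℝ} (hC : Cᵀ = C)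
    (G : Matrix (Fin n × Fin d) (Fin d) ℝ) (i : Fin n) (Z : Matrix (Fin d) (Fin d) ℝ) :
    obj C (G + blkEmb i Z) =
      obj C G + 2 * (Zᵀ * ((bcol C i)ᵀ * G)).trace + (Zᵀ * (dblk C i i * Z)).trace := by
  set E := blkEmb i Z
  have hcross : (Gᵀ * C * E).trace = (Eᵀ * C * G).trace := by
    rw [← trace_transpose, transpose_mul, transpose_mul, transpose_transpose, hC,
      Matrix.mul_assoc]
  have hlin : (Eᵀ * C * G).trace = (Zᵀ * ((bcol C i)ᵀ * G)).trace := by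
    rw [Matrix.mul_assoc, trace_blkEmb_transpose_mul, bcol_transpose_mul, hC]
  have hquad : (Eᵀ * C * E).trace = (Zᵀ * (dblk C i i * Z)).trace := by
    rw [Matrix.mul_assoc, trace_blkEmb_transpose_mul, blk_mul_blkEmb]
  simp only [obj, transpose_add, Matrix.add_mul, Matrix.mul_add, trace_add]
  rw [hcross, hlin, hquad]
  ring

theorem trace_sub_one_mul_transpose_mul (P Q B : Matrix (Fin d) (Fin d) ℝ) :
    (((Q - 1) * P)ᵀ * B).trace = (Qᵀ * (B * Pᵀ)).trace - (B * Pᵀ).trace := by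
  rw [transpose_mul, transpose_sub, transpose_one, Matrix.mul_assoc, trace_mul_comm,
    Matrix.mul_assoc, Matrix.sub_mul, Matrix.one_mul, trace_sub]

theorem trace_sub_one_mul_quadForm {A P Q : Matrix (Fin d) (Fin d) ℝ} (hA : Aᵀ = A)
    (hP : IsOd P) (hQ : IsOd Q) :
    (((Q - 1) * P)ᵀ * (A * ((Q - 1) * P))).trace = 2 * A.trace - 2 * (Qᵀ * A).trace := by
  have hAQ : (A * Q).trace = (Qᵀ * A).trace := by
    rw [← trace_transpose, transpose_mul, hA]
  have hQAQ : (Qᵀ * (A * Q)).trace = A.trace := by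
    rw [trace_mul_comm, Matrix.mul_assoc, hQ.2, Matrix.mul_one]
  rw [trace_sub_one_mul_transpose_mul, Matrix.mul_assoc, Matrix.mul_assoc, hP.2, Matrix.mul_one]
  simp only [Matrix.mul_sub, Matrix.mul_one, trace_sub, hAQ, hQAQ]
  ring

theorem trace_transpose_mul_le_of_maximizer {C : Matrix (Fin n × Fin d) (Fin n × Fin d) ℝ}
    (hC : Cᵀ = C) {G : Matrix (Fin n × Fin d) (Fin d) ℝ} (hG : OdN G)
    (hmax : ∀ G' : Matrix (Fin n × Fin d) (Fin d) ℝ, OdN G' → obj C G' ≤ obj C G)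
    (i : Fin n) {Q : Matrix (Fin d) (Fin d) ℝ} (hQ : IsOd Q) :
    (Qᵀ * ((bcol C i)ᵀ * G * (blk G i)ᵀ - dblk C i i)).trace ≤
      ((bcol C i)ᵀ * G * (blk G i)ᵀ - dblk C i i).trace := by
  have hrot : IsOd (blk G i + (Q - 1) * blk G i) := by
    rw [Matrix.sub_mul, Matrix.one_mul, add_sub_cancel]
    exact hQ.mul (hG i)
  have h := hmax _ (hG.add_blkEmb hrot)
  rw [obj_add_blkEmb hC, trace_sub_one_mul_transpose_mul,
    trace_sub_one_mul_quadForm (by rw [transpose_dblk, hC]) (hG i) hQ] at h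
  rw [Matrix.mul_sub, trace_sub, trace_sub]
  linarith

/-- global maximizers are fixed points.
Assume `C` is symmetric with positive semidefinite diagonal blocks `C_{ii}`, and let
`Ĝ ∈ O(d)^{⊗n}` be a global maximizer of (QP). Then `Cᵢᵀ Ĝ Ĝᵢᵀ − C_{ii}` is positive
semidefinite for every `i`, and `Ĝ ∈ T_α(Ĝ)` for every `α ≥ 0`. -/
theorem global_maximizer_is_fixed_point {n d : ℕ}
    (C : Matrix (Fin n × Fin d) (Fin n × Fin d) ℝ) (hCsymm : Cᵀ = C)
    (hCdiag : ∀ i : Fin n, (dblk C i i).PosSemidef)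
    (Gh : Matrix (Fin n × Fin d) (Fin d) ℝ) (hGh : OdN Gh)
    (hmax : ∀ G : Matrix (Fin n × Fin d) (Fin d) ℝ, OdN G → obj C G ≤ obj C Gh) :
    (∀ i : Fin n, ((bcol C i)ᵀ * Gh * (blk Gh i)ᵀ - dblk C i i).PosSemidef) ∧
    (∀ α : ℝ, 0 ≤ α →
      InT (C + α • (1 : Matrix (Fin n × Fin d) (Fin n × Fin d) ℝ)) Gh Gh) := by
  have hM (i : Fin n) : ((bcol C i)ᵀ * Gh * (blk Gh i)ᵀ - dblk C i i).PosSemidef :=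
    posSemidef_of_trace_le fun _ hQ => trace_transpose_mul_le_of_maximizer hCsymm hGh hmax i hQ
  refine ⟨hM, fun α hα => ⟨hGh, fun i X hX => ?_⟩⟩
  have hshift : (bcol (C + α • 1) i)ᵀ * Gh = (bcol C i)ᵀ * Gh + α • blk Gh i := by
    rw [bcol_transpose_mul, bcol_transpose_mul, transpose_add, transpose_smul, transpose_one,
      Matrix.add_mul, Matrix.smul_mul, Matrix.one_mul, blk_add, blk_smul]
  have hpsd : (((bcol C i)ᵀ * Gh + α • blk Gh i) * (blk Gh i)ᵀ).PosSemidef := by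
    rw [Matrix.add_mul, Matrix.smul_mul, (hGh i).2, ← sub_add_add_cancel _ _ (dblk C i i)]
    exact (hM i).add ((PosSemidef.one.smul hα).add (hCdiag i))
  rw [hshift]
  exact frob_sub_le_of_posSemidef_mul_transpose (hGh i) hpsd hX

end GroupSync
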